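/- Let L be a symmetric positive semidefinite N×N real matrix with kernel equal to span{𝟙ₙ}, and let Q be a symmetric N×N real matrix with 𝟙ₙᵀ Q 𝟙ₙ < 0. Then there exists g ∈ ℝ such that Q + gL is negative definite. -/

import Mathlib

open Real Matrix
open scoped Matrix

/-!
Finsler's lemma. On the unit sphere `S` the form `xᵀQx` is negative wherever `xᵀLx` vanishes, so
the compact set `{x ∈ S | xᵀQx ≥ 0}` lies where `xᵀLx > 0`, and there the ratio `xᵀQx / xᵀLx`
is bounded above by some `c`. Then `xᵀQx < c · xᵀLx` on all of `S`, and by homogeneity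
`-(Q - c L)` is positive definite. When `ker L = span{𝟙}`, the zeros of `xᵀLx` are the multiples
of `𝟙`, on which `Q` is negative because `𝟙ᵀQ𝟙 < 0`.
-/

theorem IsCompact.exists_forall_lt_mul_of_pos_of_neg {X : Type*} [TopologicalSpace X]
    {K : Set X} (hK : IsCompact K) {f p : X → ℝ} (hf : Continuous f) (hp : Continuous p)
    (hp0 : ∀ x ∈ K, 0 ≤ p x) (hfp : ∀ x ∈ K, p x = 0 → f x < 0) :
    ∃ c, ∀ x ∈ K, f x < c * p x := by
  set A := K ∩ {x | 0 ≤ f x}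
  have hpA : ∀ x ∈ A, 0 < p x := fun x hx =>
    (hp0 x hx.1).lt_of_ne fun h => (hfp x hx.1 h.symm).not_ge hx.2
  have hratio : ContinuousOn (fun x => f x / p x) A :=
    hf.continuousOn.div hp.continuousOn fun x hx => (hpA x hx).ne'
  obtain ⟨c, hc⟩ := (hK.inter_right (isClosed_le continuous_const hf)).bddAbove_image hratio
  refine ⟨max c 0 + 1, fun x hxK => ?_⟩
  by_cases hfx : 0 ≤ f x
  · have hpx := hpA x ⟨hxK, hfx⟩
    have hle : f x / p x ≤ c := hc ⟨x, ⟨hxK, hfx⟩, rfl⟩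
    rw [div_le_iff₀ hpx] at hle
    nlinarith [le_max_left c 0]
  · have := hp0 x hxK
    nlinarith [le_max_right c 0]

theorem Matrix.smul_dotProduct_mulVec_smul {n : Type*} [Fintype n] (M : Matrix n n ℝ) (c : ℝ)
    (x : n → ℝ) : (c • x) ⬝ᵥ M *ᵥ (c • x) = c ^ 2 * (x ⬝ᵥ M *ᵥ x) := by
  simp only [mulVec_smul, smul_dotProduct, dotProduct_smul, smul_eq_mul]
  ring

theorem Matrix.posDef_of_forall_mem_sphere {n : Type*} [Fintype n] {M : Matrix n n ℝ}
    (hM : M.IsHermitian) (h : ∀ x ∈ Metric.sphere (0 : n → ℝ) 1, 0 < x ⬝ᵥ M *ᵥ x) :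
    M.PosDef := by
  refine posDef_iff_dotProduct_mulVec.mpr ⟨hM, fun x hx => ?_⟩
  have hnorm : ‖x‖ ≠ 0 := norm_ne_zero_iff.mpr hx
  have hunit : ‖x‖⁻¹ • x ∈ Metric.sphere (0 : n → ℝ) 1 := by
    simp [norm_smul, hnorm]
  have := h _ hunit
  rw [smul_dotProduct_mulVec_smul] at this
  simpa using pos_of_mul_pos_right this (by positivity)

theorem Matrix.exists_posDef_neg_add_smul_of_posSemidef {n : Type*} [Fintype n]
    {Q L : Matrix n n ℝ} (hQ : Q.IsSymm) (hL : L.PosSemidef)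
    (hQL : ∀ x, x ≠ 0 → x ⬝ᵥ L *ᵥ x = 0 → x ⬝ᵥ Q *ᵥ x < 0) :
    ∃ g : ℝ, (-(Q + g • L)).PosDef := by
  have hquad {M : Matrix n n ℝ} : Continuous fun x : n → ℝ => x ⬝ᵥ M *ᵥ x :=
    continuous_id.dotProduct (continuous_const.matrix_mulVec continuous_id)
  obtain ⟨c, hc⟩ := (isCompact_sphere (0 : n → ℝ) 1).exists_forall_lt_mul_of_pos_of_neg
    hquad hquad (fun x _ => by simpa using hL.dotProduct_mulVec_nonneg x)
    (fun x hx => hQL x (ne_zero_of_mem_sphere one_ne_zero ⟨x, hx⟩))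
  refine ⟨-c, posDef_of_forall_mem_sphere ?_ fun x hx => ?_⟩
  · exact ((isHermitian_iff_isSymm.mpr hQ).add (hL.1.smul (IsSelfAdjoint.all _))).neg
  · have := hc x hx
    simp only [neg_smul, neg_add, neg_neg, add_mulVec, neg_mulVec, smul_mulVec,
      dotProduct_add, dotProduct_neg, dotProduct_smul, smul_eq_mul]
    linarith

theorem stmt5_general (N : ℕ) (L Q : Matrix (Fin N) (Fin N) ℝ)
    (hL : L.PosSemidef)
    (hker : LinearMap.ker (Matrix.toLin' L) =
      Submodule.span ℝ {(fun _ : Fin N => (1 : ℝ))})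
    (hQ : Q.IsSymm)
    (hQ1 : (fun _ : Fin N => (1 : ℝ)) ⬝ᵥ Q.mulVec (fun _ : Fin N => (1 : ℝ)) < 0) :
    ∃ g : ℝ, (-(Q + g • L)).PosDef := by
  refine exists_posDef_neg_add_smul_of_posSemidef hQ hL fun x hx hLx => ?_
  have hx_ker : x ∈ LinearMap.ker (toLin' L) := by
    simpa using (hL.dotProduct_mulVec_zero_iff x).mp (by simpa using hLx)
  rw [hker, Submodule.mem_span_singleton] at hx_ker
  obtain ⟨c, rfl⟩ := hx_ker
  have hc : c ≠ 0 := by rintro rfl; simp at hx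
  rw [smul_dotProduct_mulVec_smul]
  exact mul_neg_of_pos_of_neg (by positivity) hQ1

/-- if L ⪰ 0 symmetric with ker L = span{𝟙}, Q symmetric with
𝟙ᵀQ𝟙 < 0, then there is g ∈ ℝ with Q + gL negative definite. -/
theorem stmt5 (N : ℕ) (hN : 1 ≤ N) (L Q : Matrix (Fin N) (Fin N) ℝ)
    (hL : L.PosSemidef)
    (hker : LinearMap.ker (Matrix.toLin' L) =
      Submodule.span ℝ {(fun _ : Fin N => (1 : ℝ))})
    (hQ : Q.IsSymm)
    (hQ1 : (fun _ : Fin N => (1 : ℝ)) ⬝ᵥ Q.mulVec (fun _ : Fin N => (1 : ℝ)) < 0) :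
    ∃ g : ℝ, (-(Q + g • L)).PosDef :=
  stmt5_general N L Q hL hker hQ hQ1
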